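/- arXiv:2605.18450 — 8 statements merged into one kernel-verified Lean document; each statement's English description precedes it below -/
import Mathlib

section
/- For monotone functions f, g, h on a complete lattice, if g∘f ≤ f∘h (pointwise), then g*∘f ≤ f∘h*, where k* denotes the least closure above a monotone function k. -/
/-!
`z := f (h* x)` is a pre-fixed point of `g`, because `g z ≤ f (h (h* x)) ≤ f (h* x)`. For a
pre-fixed point `z` of a monotone `k`, the map sending `w ≤ z` to `z` and everything else to `⊤`
is a closure above `k`, so `k* w ≤ z` whenever `w ≤ z`; apply this to `w := f x ≤ z`.
-/

def IsClosure {L : Type*} [CompleteLattice L] (c : L → L) : Prop :=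
  Monotone c ∧ (∀ x, x ≤ c x) ∧ (∀ x, c (c x) ≤ c x)

/-- `c` is the least closure above `k`. -/
def IsLeastClosureAbove {L : Type*} [CompleteLattice L] (k c : L → L) : Prop :=
  IsClosure c ∧ (∀ x, k x ≤ c x) ∧
    ∀ d, IsClosure d → (∀ x, k x ≤ d x) → ∀ x, c x ≤ d x

section

variable {L : Type*} [CompleteLattice L]

/-- The closure whose closed elements are `z` and `⊤`. -/
def principalClosure (z w : L) : L :=
  ⨅ _ : w ≤ z, z

theorem principalClosure_of_le {z w : L} (hw : w ≤ z) : principalClosure z w = z :=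
  iInf_pos hw

theorem principalClosure_of_not_le {z w : L} (hw : ¬w ≤ z) : principalClosure z w = ⊤ :=
  iInf_neg hw

theorem isClosure_principalClosure (z : L) : IsClosure (principalClosure z) := by
  refine ⟨fun w w' hww' => le_iInf fun hw' => iInf_le_of_le (hww'.trans hw') le_rfl,
    fun w => le_iInf id, fun w => ?_⟩
  by_cases hw : w ≤ z
  · rw [principalClosure_of_le hw, principalClosure_of_le le_rfl]
  · rw [principalClosure_of_not_le hw]
    exact le_top

theorem IsLeastClosureAbove.le_of_le_of_map_le {k c : L → L} (hc : IsLeastClosureAbove k c)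
    (hk : Monotone k) {z : L} (hz : k z ≤ z) {w : L} (hw : w ≤ z) : c w ≤ z := by
  have hkz : ∀ x, k x ≤ principalClosure z x := by
    intro x
    by_cases hx : x ≤ z
    · rw [principalClosure_of_le hx]
      exact (hk hx).trans hz
    · rw [principalClosure_of_not_le hx]
      exact le_top
  simpa only [principalClosure_of_le hw] using
    hc.2.2 (principalClosure z) (isClosure_principalClosure z) hkz w

end

theorem stmt1_general {L : Type*} [CompleteLattice L] (f g h gs hs : L → L)
    (hf : Monotone f) (hg : Monotone g)
    (hgs : IsLeastClosureAbove g gs) (hhs : IsLeastClosureAbove h hs)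
    (hyp : ∀ x, g (f x) ≤ f (h x)) :
    ∀ x, gs (f x) ≤ f (hs x) := by
  intro x
  obtain ⟨⟨-, hs_le, hs_idem⟩, h_le_hs, -⟩ := hhs
  have hpre : g (f (hs x)) ≤ f (hs x) :=
    calc g (f (hs x)) ≤ f (h (hs x)) := hyp (hs x)
      _ ≤ f (hs (hs x)) := hf (h_le_hs (hs x))
      _ ≤ f (hs x) := hf (hs_idem x)
  exact hgs.le_of_le_of_map_le hg hpre (hf (hs_le x))

/-- If g∘f ≤ f∘h pointwise, then g*∘f ≤ f∘h*. -/
theorem stmt1 {L : Type*} [CompleteLattice L] (f g h gs hs : L → L)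
    (hf : Monotone f) (hg : Monotone g) (hh : Monotone h)
    (hgs : IsLeastClosureAbove g gs) (hhs : IsLeastClosureAbove h hs)
    (hyp : ∀ x, g (f x) ≤ f (h x)) :
    ∀ x, gs (f x) ≤ f (hs x) :=
  stmt1_general f g h gs hs hf hg hgs hhs hyp
end

section
/- Let f be a function on a complete lattice that preserves all suprema (continuous), and let g, h be monotone functions. If f∘g ≤ h∘f pointwise, then f∘g* ≤ h*∘f, where k* denotes the least closure above k. -/
section

variable {α β : Type*} [CompleteLattice α] [CompleteLattice β] {f : α → β}

theorem monotone_of_map_sSup (hf : ∀ S : Set α, f (sSup S) = ⨆ x ∈ S, f x) : Monotone f := by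
  intro a b hab
  calc f a ≤ ⨆ x ∈ ({a, b} : Set α), f x := le_biSup f (Set.mem_insert a _)
    _ = f (sSup {a, b}) := (hf _).symm
    _ = f b := by rw [sSup_pair, sup_eq_right.mpr hab]

theorem galoisConnection_of_map_sSup (hf : ∀ S : Set α, f (sSup S) = ⨆ x ∈ S, f x) :
    GaloisConnection f (fun y => sSup {x | f x ≤ y}) := by
  intro x y
  refine ⟨fun hxy => le_sSup hxy, fun hx => ?_⟩
  calc f x ≤ f (sSup {x | f x ≤ y}) := monotone_of_map_sSup hf hx
    _ = ⨆ a ∈ {x | f x ≤ y}, f a := hf _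
    _ ≤ y := iSup₂_le fun _ ha => ha

end

theorem IsClosure.comp_galoisConnection {α β : Type*} [CompleteLattice α] [CompleteLattice β]
    {l : α → β} {u : β → α} {c : β → β} (gc : GaloisConnection l u) (hc : IsClosure c) :
    IsClosure (u ∘ c ∘ l) := by
  obtain ⟨hc_mono, hc_le, hc_idem⟩ := hc
  refine ⟨gc.monotone_u.comp (hc_mono.comp gc.monotone_l), fun x => gc.le_u (hc_le (l x)),
    fun x => gc.monotone_u ?_⟩
  calc c (l (u (c (l x)))) ≤ c (c (l x)) := hc_mono (gc.l_u_le _)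
    _ ≤ c (l x) := hc_idem _

theorem stmt2_general {L : Type*} [CompleteLattice L] (f g h gs hs : L → L)
    (hfcont : ∀ S : Set L, f (sSup S) = ⨆ x ∈ S, f x)
    (hgs : IsLeastClosureAbove g gs) (hhs : IsLeastClosureAbove h hs)
    (hyp : ∀ x, f (g x) ≤ h (f x)) :
    ∀ x, f (gs x) ≤ hs (f x) := by
  obtain ⟨-, -, hgs_least⟩ := hgs
  obtain ⟨hhs_closure, hhs_above, -⟩ := hhs
  set u : L → L := fun y => sSup {x | f x ≤ y}
  have gc : GaloisConnection f u := galoisConnection_of_map_sSup hfcont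
  have hg_le : ∀ x, g x ≤ (u ∘ hs ∘ f) x := fun x => gc.le_u ((hyp x).trans (hhs_above (f x)))
  intro x
  calc f (gs x) ≤ f (u (hs (f x))) :=
        gc.monotone_l (hgs_least _ (hhs_closure.comp_galoisConnection gc) hg_le x)
    _ ≤ hs (f x) := gc.l_u_le _

/-- If f is continuous and f∘g ≤ h∘f, then f∘g* ≤ h*∘f. -/
theorem stmt2 {L : Type*} [CompleteLattice L] (f g h gs hs : L → L)
    (hfcont : ∀ S : Set L, f (sSup S) = ⨆ x ∈ S, f x)
    (hg : Monotone g) (hh : Monotone h)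
    (hgs : IsLeastClosureAbove g gs) (hhs : IsLeastClosureAbove h hs)
    (hyp : ∀ x, f (g x) ≤ h (f x)) :
    ∀ x, f (gs x) ≤ hs (f x) :=
  stmt2_general f g h gs hs hfcont hgs hhs hyp
end

section
/- Let f be a continuous function on a complete lattice, g a monotone function, and c a closure. If f∘g ≤ c∘f pointwise, then f∘g* ≤ c∘f, where g* is the least closure above g. -/
theorem gc_sSup_setOf_le_of_map_sSup {L M : Type*} [CompleteLattice L] [CompleteLattice M]
    {f : L → M} (hf : ∀ S : Set L, f (sSup S) = ⨆ x ∈ S, f x) :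
    GaloisConnection f fun y => sSup {x | f x ≤ y} := by
  intro x y
  refine ⟨fun hxy => le_sSup hxy, fun hx => ?_⟩
  set T := {x | f x ≤ y}
  calc f x ≤ ⨆ z ∈ insert x T, f z := le_biSup f (Set.mem_insert x T)
    _ = f (sSup T) := by rw [← hf, sSup_insert, sup_eq_right.mpr hx]
    _ = ⨆ z ∈ T, f z := hf T
    _ ≤ y := iSup₂_le fun _ hz => hz

theorem IsClosure.conj_galoisConnection {L M : Type*} [CompleteLattice L] [CompleteLattice M]
    {l : L → M} {u : M → L} (gc : GaloisConnection l u) {c : M → M} (hc : IsClosure c) :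
    IsClosure (u ∘ c ∘ l) := by
  obtain ⟨hc_mono, hc_le, hc_idem⟩ := hc
  refine ⟨gc.monotone_u.comp (hc_mono.comp gc.monotone_l), fun x => ?_, fun x => ?_⟩
  · exact gc.le_u (hc_le (l x))
  · exact gc.monotone_u ((hc_mono (gc.l_u_le _)).trans (hc_idem _))

theorem stmt3_general {L : Type*} [CompleteLattice L] (f g gs c : L → L)
    (hfcont : ∀ S : Set L, f (sSup S) = ⨆ x ∈ S, f x)
    (hc : IsClosure c)
    (hgs : IsLeastClosureAbove g gs)
    (hyp : ∀ x, f (g x) ≤ c (f x)) :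
    ∀ x, f (gs x) ≤ c (f x) := by
  have gc := gc_sSup_setOf_le_of_map_sSup hfcont
  have hgs_le : ∀ x, gs x ≤ sSup {y | f y ≤ c (f x)} :=
    hgs.2.2 _ (hc.conj_galoisConnection gc) fun x => gc.le_u (hyp x)
  exact fun x => gc.l_le (hgs_le x)

/-- If f is continuous, g monotone, c a closure and f∘g ≤ c∘f, then f∘g* ≤ c∘f. -/
theorem stmt3 {L : Type*} [CompleteLattice L] (f g gs c : L → L)
    (hfcont : ∀ S : Set L, f (sSup S) = ⨆ x ∈ S, f x)
    (hg : Monotone g) (hc : IsClosure c)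
    (hgs : IsLeastClosureAbove g gs)
    (hyp : ∀ x, f (g x) ≤ c (f x)) :
    ∀ x, f (gs x) ≤ c (f x) :=
  stmt3_general f g gs c hfcont hc hgs hyp
end

section
/- Let f : Lⁿ → L be an n-ary function on a complete lattice that is continuous in each coordinate, and let h : L → L be monotone. If h is contextual w.r.t. f, then the least closure h* above h is also contextual w.r.t. f. -/
/-!
Fixing all coordinates but the `i`-th turns `f` into a sup-preserving `g` with `g ∘ h ≤ h ∘ g`.
The set `T = {s | g s ≤ h* (g y)}` is closed under suprema, so it contains `m = sSup T`. Since
`h* (g y)` is a fixed point of `h*`, `T` is closed under `h` on the down-set of `m`, i.e.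
`v ≤ m → h v ≤ m`. The elements with this property form a Moore family whose closure operator
lies above `h`, so `h* y ≤ m` by minimality, and `g (h* y) ≤ g m ≤ h* (g y)`.
-/
theorem ClosureOperator.isClosure {L : Type*} [CompleteLattice L] (c : ClosureOperator L) :
    IsClosure c :=
  ⟨c.monotone, c.le_closure, fun x => (c.idempotent x).le⟩

theorem monotone_of_map_sSup_s5 {α β : Type*} [CompleteLattice α] [CompleteLattice β]
    {g : α → β} (hg : ∀ S, g (sSup S) = ⨆ y ∈ S, g y) : Monotone g :=
  OrderHomClass.mono (⟨g, fun S => (hg S).trans sSup_image.symm⟩ : sSupHom α β)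

namespace IsLeastClosureAbove

variable {L : Type*} [CompleteLattice L] {h hs : L → L}

theorem le_of_forall_le_imp_le (hhs : IsLeastClosureAbove h hs) {y w : L} (hyw : y ≤ w)
    (hw : ∀ v ≤ w, h v ≤ w) : hs y ≤ w := by
  let c : ClosureOperator L := .ofCompletePred (fun w => ∀ v ≤ w, h v ≤ w)
    fun _ hS v hv => le_sInf fun a ha => hS a ha v (hv.trans (sInf_le ha))
  have hcw : c y ≤ w := c.closure_min hyw hw
  have h_le_c : ∀ x, h x ≤ c x := fun x => c.isClosed_closure x x (c.le_closure x)
  exact (hhs.2.2 c c.isClosure h_le_c y).trans hcw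

theorem apply_le_self_of_le (hhs : IsLeastClosureAbove h hs) {v w : L} (hvw : v ≤ hs w) :
    h v ≤ hs w :=
  calc h v ≤ hs v := hhs.2.1 v
    _ ≤ hs (hs w) := hhs.1.1 hvw
    _ ≤ hs w := hhs.1.2.2 w

end IsLeastClosureAbove

theorem map_leastClosure_le_of_map_le {α β : Type*} [CompleteLattice α] [CompleteLattice β]
    {g : α → β} (hg : ∀ S, g (sSup S) = ⨆ y ∈ S, g y) {h hs : α → α} {k ks : β → β}
    (hgh : ∀ y, g (h y) ≤ k (g y)) (hhs : IsLeastClosureAbove h hs)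
    (hks : IsLeastClosureAbove k ks) (y : α) : g (hs y) ≤ ks (g y) := by
  set T : Set α := {s | g s ≤ ks (g y)}
  have hT : g (sSup T) ≤ ks (g y) := (hg T).trans_le (iSup₂_le fun _ hmem => hmem)
  have hyT : y ∈ T := hks.1.2.1 (g y)
  have hT_closed : ∀ v ≤ sSup T, h v ≤ sSup T := fun v hv => le_sSup <|
    (hgh v).trans (hks.apply_le_self_of_le ((monotone_of_map_sSup_s5 hg hv).trans hT))
  exact (monotone_of_map_sSup_s5 hg (hhs.le_of_forall_le_imp_le (le_sSup hyT) hT_closed)).trans hT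

theorem stmt5_general {L : Type*} [CompleteLattice L] {n : ℕ}
    (f : (Fin n → L) → L)
    (hfcont : ∀ (x : Fin n → L) (i : Fin n) (S : Set L),
      f (Function.update x i (sSup S)) = ⨆ y ∈ S, f (Function.update x i y))
    (h hs : L → L)
    (hctx : ∀ (x : Fin n → L) (i : Fin n), f (Function.update x i (h (x i))) ≤ h (f x))
    (hhs : IsLeastClosureAbove h hs) :
    ∀ (x : Fin n → L) (i : Fin n), f (Function.update x i (hs (x i))) ≤ hs (f x) := by
  intro x i
  have hctx_i : ∀ y, f (Function.update x i (h y)) ≤ h (f (Function.update x i y)) := by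
    intro y
    simpa only [Function.update_self, Function.update_idem] using hctx (Function.update x i y) i
  simpa only [Function.update_eq_self] using map_leastClosure_le_of_map_le
    (g := fun y => f (Function.update x i y)) (hfcont x i) hctx_i hhs hhs (x i)

/-- If f is continuous in each coordinate and h is contextual w.r.t. f,
then so is the least closure h* above h. -/
theorem stmt5 {L : Type*} [CompleteLattice L] {n : ℕ}
    (f : (Fin n → L) → L)
    (hfcont : ∀ (x : Fin n → L) (i : Fin n) (S : Set L),
      f (Function.update x i (sSup S)) = ⨆ y ∈ S, f (Function.update x i y))
    (h hs : L → L) (hh : Monotone h)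
    (hctx : ∀ (x : Fin n → L) (i : Fin n), f (Function.update x i (h (x i))) ≤ h (f x))
    (hhs : IsLeastClosureAbove h hs) :
    ∀ (x : Fin n → L) (i : Fin n), f (Function.update x i (hs (x i))) ≤ hs (f x) :=
  stmt5_general f hfcont h hs hctx hhs
end

section
/- Let c₁ and c₂ be closure operators on a complete lattice, and let c be the least closure above the supremum c₁ ⊔ c₂. Then c = c₂ ∘ c₁ if and only if c₁ ∘ c₂ ≤ c₂ ∘ c₁ pointwise. -/
/-!
Any closure `d` above `c₁ ⊔ c₂` dominates `c₂ ∘ c₁`, since `c₂ (c₁ x) ≤ d (d x) ≤ d x`, and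
`c₂ ∘ c₁` itself lies above `c₁ ⊔ c₂`. Hence the least closure above `c₁ ⊔ c₂` is `c₂ ∘ c₁`
exactly when `c₂ ∘ c₁` is a closure, and this happens exactly when `c₁ ∘ c₂ ≤ c₂ ∘ c₁`.
-/

namespace IsClosure

variable {L : Type*} [CompleteLattice L] {c₁ c₂ d : L → L}

theorem comp_le (hd : IsClosure d) (h₁ : ∀ x, c₁ x ≤ d x) (h₂ : ∀ x, c₂ x ≤ d x) (x : L) :
    c₂ (c₁ x) ≤ d x :=
  calc c₂ (c₁ x) ≤ d (d x) := (h₂ _).trans (hd.1 (h₁ x))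
    _ ≤ d x := hd.2.2 x

theorem sup_le_comp (h₁ : IsClosure c₁) (h₂ : IsClosure c₂) (x : L) :
    c₁ x ⊔ c₂ x ≤ c₂ (c₁ x) :=
  sup_le (h₂.2.1 _) (h₂.1 (h₁.2.1 x))

theorem comp_of_comm_le (h₁ : IsClosure c₁) (h₂ : IsClosure c₂)
    (hcomm : ∀ x, c₁ (c₂ x) ≤ c₂ (c₁ x)) : IsClosure (c₂ ∘ c₁) := by
  refine ⟨h₂.1.comp h₁.1, fun x => (h₁.2.1 x).trans (h₂.2.1 _), fun x => ?_⟩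
  have hc₁ : c₁ (c₂ (c₁ x)) ≤ c₂ (c₁ x) := (hcomm (c₁ x)).trans (h₂.1 (h₁.2.2 x))
  exact (h₂.1 hc₁).trans (h₂.2.2 _)

theorem comm_le_of_comp (h₁ : IsClosure c₁) (h₂ : IsClosure c₂) (hcomp : IsClosure (c₂ ∘ c₁))
    (x : L) : c₁ (c₂ x) ≤ c₂ (c₁ x) :=
  calc c₁ (c₂ x) ≤ c₁ (c₂ (c₁ x)) := h₁.1 (h₂.1 (h₁.2.1 x))
    _ ≤ c₂ (c₁ (c₂ (c₁ x))) := h₂.2.1 _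
    _ ≤ c₂ (c₁ x) := hcomp.2.2 x

theorem comp_iff_comm_le (h₁ : IsClosure c₁) (h₂ : IsClosure c₂) :
    IsClosure (c₂ ∘ c₁) ↔ ∀ x, c₁ (c₂ x) ≤ c₂ (c₁ x) :=
  ⟨h₁.comm_le_of_comp h₂, h₁.comp_of_comm_le h₂⟩

end IsClosure

theorem IsLeastClosureAbove.eq_comp_iff {L : Type*} [CompleteLattice L] {c₁ c₂ c : L → L}
    (h₁ : IsClosure c₁) (h₂ : IsClosure c₂) (hc : IsLeastClosureAbove (fun x => c₁ x ⊔ c₂ x) c) :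
    (∀ x, c x = c₂ (c₁ x)) ↔ IsClosure (c₂ ∘ c₁) := by
  obtain ⟨hc_closure, hc_above, hc_least⟩ := hc
  constructor
  · intro heq
    rwa [show c₂ ∘ c₁ = c from funext fun x => (heq x).symm]
  · intro hcomp x
    refine le_antisymm (hc_least _ hcomp (h₁.sup_le_comp h₂) x) ?_
    exact hc_closure.comp_le (fun y => le_sup_left.trans (hc_above y))
      (fun y => le_sup_right.trans (hc_above y)) x

/-- The least closure above c₁ ⊔ c₂ equals c₂ ∘ c₁ iff c₁ ∘ c₂ ≤ c₂ ∘ c₁. -/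
theorem stmt8 {L : Type*} [CompleteLattice L] (c₁ c₂ c : L → L)
    (h₁ : IsClosure c₁) (h₂ : IsClosure c₂)
    (hc : IsLeastClosureAbove (fun x => c₁ x ⊔ c₂ x) c) :
    (∀ x, c x = c₂ (c₁ x)) ↔ (∀ x, c₁ (c₂ x) ≤ c₂ (c₁ x)) :=
  (hc.eq_comp_iff h₁ h₂).trans (h₁.comp_iff_comm_le h₂)
end

section
/- In a commutative Kleene algebra (an idempotent commutative semiring with a Kleene star satisfying 1 + x·x* ≤ x* and the induction rule x + y·z ≤ y → x·z* ≤ y), for all elements e and f, one has e*·f* = (e+f)*. -/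
/-!
Read `a ≤ b` as `a + b = b`; the hypotheses then make `K` a Kleene algebra, commutativity
supplying the left-handed star axioms from the right-handed ones. In any Kleene algebra
`a∗ * b∗ = (a + b)∗` for commuting `a` and `b`: `≤` holds since both factors lie below the
idempotent `(a + b)∗`, and `≥` by star induction, since `a∗ * b∗ ≥ 1` is closed under
multiplication by `a` and by `b`, the latter because `b` commutes with `a∗`.
-/

open Computability

abbrev KleeneAlgebra.ofCommSemiring {α : Type*} [CommSemiring α] (hidem : ∀ a : α, a + a = a)
    (st : α → α) (hunfold : ∀ a : α, (1 + a * st a) + st a = st a)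
    (hind : ∀ a b c : α, (a + b * c) + b = b → a * st c + b = b) : KleeneAlgebra α :=
  letI := IdemSemiring.ofSemiring hidem
  have unfold (a : α) : 1 + a * st a ≤ st a := hunfold a
  have mul_kstar_le_self (a b : α) (h : b * a ≤ b) : b * st a ≤ b :=
    hind b b a (add_le le_rfl h)
  { kstar := st
    one_le_kstar a := (add_le_iff.1 (unfold a)).1
    mul_kstar_le_kstar a := (add_le_iff.1 (unfold a)).2
    kstar_mul_le_kstar a := mul_comm a (st a) ▸ (add_le_iff.1 (unfold a)).2
    mul_kstar_le_self
    kstar_mul_le_self a b h := mul_comm b (st a) ▸ mul_kstar_le_self a b (mul_comm a b ▸ h) }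

namespace Commute

variable {α : Type*} [KleeneAlgebra α] {a b : α}

theorem kstar_left (h : Commute a b) : Commute (a∗) b := by
  refine le_antisymm ?_ ?_
  · refine kstar_mul_le (le_mul_of_one_le_right' one_le_kstar) ?_
    rw [← mul_assoc, h.eq, mul_assoc]
    exact mul_right_mono mul_kstar_le_kstar
  · refine mul_kstar_le (le_mul_of_one_le_left' one_le_kstar) ?_
    rw [mul_assoc, ← h.eq, ← mul_assoc]
    exact mul_left_mono kstar_mul_le_kstar

theorem kstar_mul_kstar (h : Commute a b) : a∗ * b∗ = (a + b)∗ := by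
  refine le_antisymm ?_ ?_
  · calc a∗ * b∗ ≤ (a + b)∗ * (a + b)∗ :=
          mul_le_mul' (kstar_mono le_self_add) (kstar_mono le_add_self)
      _ = (a + b)∗ := _root_.kstar_mul_kstar _
  · refine kstar_le_of_mul_le_right (one_le_mul one_le_kstar one_le_kstar) ?_
    rw [add_mul, ← mul_assoc, ← mul_assoc, ← h.kstar_left.eq, mul_assoc (a∗)]
    exact add_le (mul_left_mono mul_kstar_le_kstar) (mul_right_mono mul_kstar_le_kstar)

end Commute

/-- In a commutative Kleene algebra (idempotent commutative semiring with a star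
satisfying 1 + x·x* ≤ x* and the induction rule x + y·z ≤ y → x·z* ≤ y, where
a ≤ b means a + b = b), we have e*·f* = (e+f)*. -/
theorem stmt11 {K : Type*} [CommSemiring K] (hidem : ∀ x : K, x + x = x)
    (st : K → K)
    (hunfold : ∀ x : K, (1 + x * st x) + st x = st x)
    (hind : ∀ x y z : K, (x + y * z) + y = y → x * st z + y = y)
    (e f : K) : st e * st f = st (e + f) :=
  letI := KleeneAlgebra.ofCommSemiring hidem st hunfold hind
  (Commute.all e f).kstar_mul_kstar
end

section
/- In a commutative Kleene algebra in which an element a satisfies a ≤ a·a, for every k ≥ 0 and every element u, one has a·(u·aᵏ)* = a·(u·(1 + a + ⋯ + aᵏ))*. -/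
/-- In a commutative Kleene algebra in which a ≤ a·a, for every k and u,
a·(u·aᵏ)* = a·(u·(1 + a + ⋯ + aᵏ))* (with a ≤ b meaning a + b = b). -/
theorem stmt13 {K : Type*} [CommSemiring K] (hidem : ∀ x : K, x + x = x)
    (st : K → K)
    (hunfold : ∀ x : K, (1 + x * st x) + st x = st x)
    (hind : ∀ x y z : K, (x + y * z) + y = y → x * st z + y = y)
    (a : K) (ha : a + a * a = a * a) (k : ℕ) (u : K) :
    a * st (u * a ^ k) = a * st (u * (Finset.range (k + 1)).sum fun i => a ^ i) := by
  have letrans : ∀ {x y z : K}, x + y = y → y + z = z → x + z = z := by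
    intro x y z h1 h2
    calc x + z = x + (y + z) := by rw [h2]
      _ = (x + y) + z := by ring
      _ = y + z := by rw [h1]
      _ = z := h2
  have leaddl : ∀ x y : K, x + (x + y) = x + y := by
    intro x y; rw [← add_assoc, hidem]
  have leaddr : ∀ x y : K, y + (x + y) = x + y := by
    intro x y; rw [add_comm x y, ← add_assoc, hidem]
  have addle : ∀ {x y z : K}, x + z = z → y + z = z → (x + y) + z = z := by
    intro x y z h1 h2; rw [add_assoc, h2, h1]
  have mulmono : ∀ (w : K) {x y : K}, x + y = y → w * x + w * y = w * y := by
    intro w x y h; rw [← mul_add, h]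
  have antisym : ∀ {x y : K}, x + y = y → y + x = x → x = y := by
    intro x y h1 h2; rw [← h2, add_comm, h1]
  have one_le_st : ∀ x : K, 1 + st x = st x := fun x =>
    letrans (leaddl 1 (x * st x)) (hunfold x)
  have mul_st_le : ∀ x : K, x * st x + st x = st x := fun x =>
    letrans (leaddr 1 (x * st x)) (hunfold x)
  have st_mono : ∀ {x y : K}, x + y = y → st x + st y = st y := by
    intro x y h
    have h1 : (1 + st y * x) + st y = st y := by
      apply addle (one_le_st y)
      exact letrans (mulmono (st y) h) (by rw [mul_comm]; exact mul_st_le y)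
    have := hind 1 (st y) x h1
    rwa [one_mul] at this
  have step : ∀ j : ℕ, a * a ^ j + a * a ^ (j + 1) = a * a ^ (j + 1) := by
    intro j
    have h := mulmono (a ^ j) ha
    rw [show a * a ^ j = a ^ j * a from by ring,
        show a * a ^ (j + 1) = a ^ j * (a * a) from by ring]
    exact h
  have pow_le : ∀ i j : ℕ, i ≤ j → a * a ^ i + a * a ^ j = a * a ^ j := by
    intro i j hij
    induction j, hij using Nat.le_induction with
    | base => exact hidem _
    | succ n hn ih => exact letrans ih (step n)
  have sum_le : ∀ (s : Finset ℕ) (f : ℕ → K) (y : K),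
      (∀ i ∈ s, f i + y = y) → s.sum f + y = y := by
    intro s f y h
    induction s using Finset.induction with
    | empty => simp
    | insert _ _ hx ih =>
        rw [Finset.sum_insert hx]
        exact addle (h _ (Finset.mem_insert_self _ _))
          (ih fun i hi => h i (Finset.mem_insert_of_mem hi))
  set P : K := (Finset.range (k + 1)).sum (fun i => a ^ i) with hP
  have hk : a ^ k + P = P := by
    have hmem : k ∈ Finset.range (k + 1) := Finset.self_mem_range_succ k
    rw [hP]
    conv_rhs => rw [← Finset.add_sum_erase _ _ hmem]
    conv_lhs => rw [← Finset.add_sum_erase _ _ hmem]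
    exact leaddl _ _
  have l2r : a * st (u * a ^ k) + a * st (u * P) = a * st (u * P) :=
    mulmono a (st_mono (mulmono u hk))
  have key : (a + (a * st (u * a ^ k)) * (u * P)) + a * st (u * a ^ k)
      = a * st (u * a ^ k) := by
    apply addle
    · have := mulmono a (one_le_st (u * a ^ k)); rwa [mul_one] at this
    · have hrw : (a * st (u * a ^ k)) * (u * P)
          = (Finset.range (k + 1)).sum (fun i => (a * st (u * a ^ k)) * (u * a ^ i)) := by
        rw [hP, Finset.mul_sum, Finset.mul_sum]
      rw [hrw]
      apply sum_le
      intro i hi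
      have hik : i ≤ k := Nat.lt_succ_iff.mp (Finset.mem_range.mp hi)
      have h2 := mulmono (u * st (u * a ^ k)) (pow_le i k hik)
      have h3 := mulmono a (mul_st_le (u * a ^ k))
      have h4 : u * st (u * a ^ k) * (a * a ^ k) + a * st (u * a ^ k)
          = a * st (u * a ^ k) := by
        rw [show u * st (u * a ^ k) * (a * a ^ k) = a * ((u * a ^ k) * st (u * a ^ k)) from
          by ring]
        exact h3
      have := letrans h2 h4
      rw [show (a * st (u * a ^ k)) * (u * a ^ i) = u * st (u * a ^ k) * (a * a ^ i) from
        by ring]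
      exact this
  have r2l := hind a (a * st (u * a ^ k)) (u * P) key
  exact antisym l2r r2l
end

section
/- There exists a complete, linearly ordered idempotent semiring with a star operation defined as the least fixpoint x* = μy.(1 + x·y), satisfying all semiring axioms, distribution of product over binary joins, and the fixpoint unfolding and least-prefixpoint induction laws (in the naive form: e[x:=f] ≤ f implies μx.e ≤ f for the function y ↦ 1 + a·y), in which a*·a ≤ a* fails for some element a. -/
namespace Stmt19Aux

abbrev NN := WithTop ℕ
abbrev T1 := WithTop NN
abbrev L0 := WithBot T1

def m2 : T1 → T1 → T1
  | ⊤, _ => ⊤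
  | _, ⊤ => ⊤
  | (a : NN), (b : NN) => if a = ⊤ ∧ b ≠ 0 then ⊤ else ((a + b : NN) : T1)

def m1 : L0 → L0 → L0
  | ⊥, _ => ⊥
  | _, ⊥ => ⊥
  | (u : T1), (v : T1) => ((m2 u v : T1) : L0)

@[simp] lemma m2_top_left (v : T1) : m2 ⊤ v = ⊤ := by cases v <;> rfl
@[simp] lemma m2_top_right (a : NN) : m2 (a : T1) ⊤ = ⊤ := rfl
@[simp] lemma m2_coe_coe (a b : NN) :
    m2 (a : T1) (b : T1) = if a = ⊤ ∧ b ≠ 0 then ⊤ else ((a + b : NN) : T1) := rfl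

@[simp] lemma m1_bot_left (v : L0) : m1 ⊥ v = ⊥ := by cases v <;> rfl
@[simp] lemma m1_bot_right (u : L0) : m1 u ⊥ = ⊥ := by cases u <;> rfl
@[simp] lemma m1_coe_coe (u v : T1) : m1 (u : L0) (v : L0) = ((m2 u v : T1) : L0) := rfl

lemma m2_assoc (x y z : T1) : m2 (m2 x y) z = m2 x (m2 y z) := by
  induction x using WithTop.recTopCoe with
  | top => simp
  | coe a =>
    induction y using WithTop.recTopCoe with
    | top => simp
    | coe b =>
      induction z using WithTop.recTopCoe with
      | top =>
        simp only [m2_coe_coe, m2_top_right]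
        split_ifs <;> rfl
      | coe c =>
        rcases eq_or_ne b 0 with hb0|hb0 <;> rcases eq_or_ne c 0 with hc0|hc0 <;>
          rcases eq_or_ne a ⊤ with ha|ha <;> rcases eq_or_ne b ⊤ with hb|hb <;>
          rcases eq_or_ne c ⊤ with hc|hc <;>
          simp_all [m2_top_left, m2_top_right, WithTop.add_eq_top, add_eq_zero, add_assoc,
            -WithTop.coe_add, -WithTop.coe_zero]

lemma m2_one_left (x : T1) : m2 ((0 : NN) : T1) x = x := by
  induction x using WithTop.recTopCoe with
  | top => rfl
  | coe b => rw [m2_coe_coe]; simp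

lemma m2_one_right (x : T1) : m2 x ((0 : NN) : T1) = x := by
  induction x using WithTop.recTopCoe with
  | top => rfl
  | coe a => rw [m2_coe_coe]; simp

lemma m2_mono_right {v w : T1} (x : T1) (h : v ≤ w) : m2 x v ≤ m2 x w := by
  induction x using WithTop.recTopCoe with
  | top => simp
  | coe a =>
    induction w using WithTop.recTopCoe with
    | top => exact le_top
    | coe c =>
      induction v using WithTop.recTopCoe with
      | top => exact absurd h (WithTop.not_top_le_coe c)
      | coe b =>
        have hbc : b ≤ c := WithTop.coe_le_coe.1 h
        simp only [m2_coe_coe]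
        split_ifs with h1 h2 h2
        · exact le_rfl
        · exfalso
          apply h2
          refine ⟨h1.1, fun h0 => h1.2 ?_⟩
          rw [h0] at hbc
          exact le_antisymm hbc (zero_le : 0 ≤ b)
        · exact le_top
        · exact WithTop.coe_le_coe.2 (add_le_add_right hbc a)

lemma m2_mono_left {u u' : T1} (v : T1) (h : u ≤ u') : m2 u v ≤ m2 u' v := by
  induction u' using WithTop.recTopCoe with
  | top => simp
  | coe a' =>
    induction u using WithTop.recTopCoe with
    | top => exact absurd h (WithTop.not_top_le_coe a')
    | coe a =>
      induction v using WithTop.recTopCoe with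
      | top => simp
      | coe b =>
        have haa : a ≤ a' := WithTop.coe_le_coe.1 h
        simp only [m2_coe_coe]
        split_ifs with h1 h2 h2
        · exact le_rfl
        · exfalso
          apply h2
          rw [h1.1] at haa
          exact ⟨top_le_iff.1 haa, h1.2⟩
        · exact le_top
        · exact WithTop.coe_le_coe.2 (add_le_add_left haa b)

lemma m1_mono_right {v w : L0} (x : L0) (h : v ≤ w) : m1 x v ≤ m1 x w := by
  induction x using WithBot.recBotCoe with
  | bot => simp
  | coe u =>
    induction v using WithBot.recBotCoe with
    | bot => simp
    | coe v =>
      induction w using WithBot.recBotCoe with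
      | bot => exact absurd h (WithBot.not_coe_le_bot v)
      | coe w =>
        simp only [m1_coe_coe]
        exact WithBot.coe_le_coe.2 (m2_mono_right u (WithBot.coe_le_coe.1 h))

lemma m1_mono_left {u u' : L0} (v : L0) (h : u ≤ u') : m1 u v ≤ m1 u' v := by
  induction u using WithBot.recBotCoe with
  | bot => simp
  | coe u =>
    induction u' using WithBot.recBotCoe with
    | bot => exact absurd h (WithBot.not_coe_le_bot u)
    | coe u' =>
      induction v using WithBot.recBotCoe with
      | bot => simp
      | coe v =>
        simp only [m1_coe_coe]
        exact WithBot.coe_le_coe.2 (m2_mono_left v (WithBot.coe_le_coe.1 h))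

def one0 : L0 := (((0 : NN) : T1) : L0)
def aa : L0 := (((1 : NN) : T1) : L0)
def aw : L0 := (((⊤ : NN) : T1) : L0)

lemma aw_prefix : one0 ⊔ m1 aa aw ≤ aw := by
  have h1 : m1 aa aw = aw := by
    rw [aa, aw, m1_coe_coe, m2_coe_coe]
    rw [if_neg (by simp)]
    rw [add_top]
  rw [h1]
  refine sup_le ?_ le_rfl
  exact WithBot.coe_le_coe.2 (WithTop.coe_le_coe.2 le_top)

lemma aw_least {y : L0} (hy : one0 ⊔ m1 aa y ≤ y) : aw ≤ y := by
  rw [sup_le_iff] at hy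
  obtain ⟨h1, h2⟩ := hy
  induction y using WithBot.recBotCoe with
  | bot => exact absurd h1 (WithBot.not_coe_le_bot _)
  | coe u =>
    induction u using WithTop.recTopCoe with
    | top => exact WithBot.coe_le_coe.2 le_top
    | coe v =>
      rw [aa, m1_coe_coe, m2_coe_coe, if_neg (by simp)] at h2
      have hv : (1 : NN) + v ≤ v := WithTop.coe_le_coe.1 (WithBot.coe_le_coe.1 h2)
      induction v using WithTop.recTopCoe with
      | top => exact le_rfl
      | coe n =>
        exfalso
        rw [← WithTop.coe_one, ← WithTop.coe_add] at hv
        have := WithTop.coe_le_coe.1 hv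
        omega

lemma st_eq : sInf {y | one0 ⊔ m1 aa y ≤ y} = aw :=
  le_antisymm (sInf_le aw_prefix) (le_sInf fun _ hy => aw_least hy)

lemma not_le_final : ¬ m1 aw aa ≤ aw := by
  have h : m1 aw aa = ((⊤ : T1) : L0) := by
    rw [aw, aa, m1_coe_coe, m2_coe_coe, if_pos (by simp)]
  rw [h, aw]
  intro hle
  exact WithTop.coe_ne_top (top_le_iff.1 (WithBot.coe_le_coe.1 hle))

end Stmt19Aux

open Stmt19Aux in
/-- There is a complete, linearly ordered idempotent semiring (join as addition,
bottom as zero) in which product distributes over binary joins and annihilates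
bottom, with a star operation satisfying the fixpoint unfolding law
1 ⊔ x·x* ≤ x* and the naive least-prefixpoint induction rule
1 ⊔ x·y ≤ y → x* ≤ y, and yet a*·a ≤ a* fails for some a. -/
theorem stmt19 :
    ∃ (L : Type) (_ : CompleteLinearOrder L) (mul : L → L → L) (one : L),
      (∀ x y z : L, mul (mul x y) z = mul x (mul y z)) ∧
      (∀ x : L, mul one x = x) ∧ (∀ x : L, mul x one = x) ∧
      (∀ x : L, mul x ⊥ = ⊥) ∧ (∀ x : L, mul ⊥ x = ⊥) ∧
      (∀ x y z : L, mul x (y ⊔ z) = mul x y ⊔ mul x z) ∧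
      (∀ x y z : L, mul (x ⊔ y) z = mul x z ⊔ mul y z) ∧
      ∃ st : L → L,
        (∀ x : L, one ⊔ mul x (st x) ≤ st x) ∧
        (∀ x y : L, one ⊔ mul x y ≤ y → st x ≤ y) ∧
        ∃ a : L, ¬ mul (st a) a ≤ st a := by
  classical
  refine ⟨L0, inferInstance, m1, one0, ?_, ?_, ?_, ?_, ?_, ?_, ?_, ?_⟩
  · intro x y z
    induction x using WithBot.recBotCoe with
    | bot => simp
    | coe u =>
      induction y using WithBot.recBotCoe with
      | bot => simp
      | coe v =>
        induction z using WithBot.recBotCoe with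
        | bot => simp
        | coe w => simp [m2_assoc]
  · intro x
    induction x using WithBot.recBotCoe with
    | bot => simp
    | coe u => rw [one0, m1_coe_coe, m2_one_left]
  · intro x
    induction x using WithBot.recBotCoe with
    | bot => simp
    | coe u => rw [one0, m1_coe_coe, m2_one_right]
  · intro x; simp
  · intro x; simp
  · intro x y z
    rcases le_total y z with h|h
    · rw [sup_eq_right.2 h, sup_eq_right.2 (m1_mono_right x h)]
    · rw [sup_eq_left.2 h, sup_eq_left.2 (m1_mono_right x h)]
  · intro x y z
    rcases le_total x y with h|h
    · rw [sup_eq_right.2 h, sup_eq_right.2 (m1_mono_left z h)]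
    · rw [sup_eq_left.2 h, sup_eq_left.2 (m1_mono_left z h)]
  · refine ⟨fun x => sInf {y | one0 ⊔ m1 x y ≤ y}, ?_, ?_, ?_⟩
    · intro x
      refine le_sInf fun y hy => ?_
      calc one0 ⊔ m1 x (sInf {y | one0 ⊔ m1 x y ≤ y})
          ≤ one0 ⊔ m1 x y := sup_le_sup_left (m1_mono_right x (sInf_le hy)) one0
        _ ≤ y := hy
    · intro x y h
      exact sInf_le h
    · refine ⟨aa, ?_⟩
      show ¬ m1 (sInf {y | one0 ⊔ m1 aa y ≤ y}) aa ≤ sInf {y | one0 ⊔ m1 aa y ≤ y}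
      rw [st_eq]
      exact not_le_final
end
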